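/- For r ∈ ℝ, r ≠ 0, and τ ∈ ℍ: ∫_{−∞}^{∞} e^{πiτw²}/(w + ir) dw = −πr ∫₀^{i∞} e^{πir²z}/√(−i(z+τ)) dz, where the second integral is along the positive imaginary axis. -/

import Mathlib

open Real MeasureTheory

namespace GaussPoleAux

open Set Function

lemma re_aux (τ : ℂ) (w : ℝ) : ((π : ℂ) * Complex.I * τ * (w:ℂ)^2).re = -(π * τ.im) * w^2 := by
  simp [Complex.mul_re, Complex.mul_im, ← Complex.ofReal_pow]

lemma norm_E (τ : ℂ) (w : ℝ) :
    ‖Complex.exp ((π : ℂ) * Complex.I * τ * (w:ℂ)^2)‖ = Real.exp (-(π * τ.im) * w^2) := by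
  rw [Complex.norm_exp, re_aux]

lemma integrable_E_mul {τ : ℂ} (hτ : 0 < τ.im) (φ : ℝ → ℂ) (hφ : Continuous φ)
    (C : ℝ) (hC : ∀ w, ‖φ w‖ ≤ C) :
    Integrable fun w : ℝ => Complex.exp ((π : ℂ) * Complex.I * τ * (w:ℂ)^2) * φ w := by
  apply Integrable.mono' ((integrable_exp_neg_mul_sq (mul_pos pi_pos hτ)).const_mul C)
  · exact ((Complex.continuous_exp.comp (by continuity)).mul hφ).aestronglyMeasurable
  · filter_upwards with w
    rw [norm_mul, norm_E]
    calc Real.exp (-(π * τ.im) * w^2) * ‖φ w‖ ≤ Real.exp (-(π * τ.im) * w^2) * C :=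
          mul_le_mul_of_nonneg_left (hC w) (Real.exp_nonneg _)
      _ = C * Real.exp (-(π * τ.im) * w^2) := mul_comm _ _

lemma odd_vanish {τ : ℂ} (r : ℝ) :
    (∫ w : ℝ, Complex.exp ((π : ℂ) * Complex.I * τ * (w:ℂ)^2)
      * ((w:ℂ) / ((w:ℂ)^2 + (r:ℂ)^2))) = 0 := by
  set f : ℝ → ℂ := fun w => Complex.exp ((π : ℂ) * Complex.I * τ * (w:ℂ)^2)
      * ((w:ℂ) / ((w:ℂ)^2 + (r:ℂ)^2)) with hf
  have h1 : ∫ w : ℝ, f (-w) = ∫ w : ℝ, f w := integral_neg_eq_self f volume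
  have h2 : ∀ w : ℝ, f (-w) = - f w := by
    intro w
    simp only [hf]
    push_cast
    ring_nf
  rw [funext h2] at h1
  rw [integral_neg] at h1
  linear_combination -h1 / 2


lemma cast_denom (r w : ℝ) : (w:ℂ)^2 + (r:ℂ)^2 = ((w^2 + r^2 : ℝ) : ℂ) := by push_cast; ring

lemma denom_pos {r : ℝ} (hr : r ≠ 0) (w : ℝ) : 0 < w^2 + r^2 := by positivity

lemma denom_ne {r : ℝ} (hr : r ≠ 0) (w : ℝ) : (w:ℂ)^2 + (r:ℂ)^2 ≠ 0 := by
  rw [cast_denom]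
  exact_mod_cast (denom_pos hr w).ne'

lemma norm_phi1 {r : ℝ} (hr : r ≠ 0) (w : ℝ) :
    ‖(w:ℂ) / ((w:ℂ)^2 + (r:ℂ)^2)‖ ≤ 1/(2*|r|) := by
  rw [cast_denom, norm_div, Complex.norm_real, Complex.norm_real, Real.norm_eq_abs,
    Real.norm_eq_abs, abs_of_pos (denom_pos hr w)]
  rw [div_le_div_iff₀ (denom_pos hr w) (by positivity)]
  nlinarith [sq_nonneg (|w| - |r|), sq_abs w, sq_abs r, abs_nonneg w, abs_pos.mpr hr]

lemma norm_phi0 {r : ℝ} (hr : r ≠ 0) (w : ℝ) :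
    ‖((w:ℂ)^2 + (r:ℂ)^2)⁻¹‖ ≤ 1/r^2 := by
  rw [cast_denom, norm_inv, Complex.norm_real, Real.norm_eq_abs, abs_of_pos (denom_pos hr w)]
  rw [inv_le_iff_one_le_mul₀ (denom_pos hr w)]
  rw [one_div, ← div_eq_inv_mul, le_div_iff₀ (by positivity : (0:ℝ) < r^2)]
  nlinarith [sq_nonneg w]

lemma cont_phi0 {r : ℝ} (hr : r ≠ 0) :
    Continuous fun w : ℝ => ((w:ℂ)^2 + (r:ℂ)^2)⁻¹ :=
  Continuous.inv₀ (by continuity) (fun w => denom_ne hr w)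


lemma ofReal_mul_cpow {x : ℝ} (hx : 0 < x) {b : ℂ} (hb : b ≠ 0) (y : ℂ) :
    ((x:ℂ) * b) ^ y = (x:ℂ) ^ y * b ^ y := by
  rw [Complex.cpow_def_of_ne_zero (mul_ne_zero (Complex.ofReal_ne_zero.mpr hx.ne') hb),
    Complex.log_ofReal_mul hx hb, add_mul, Complex.exp_add,
    Complex.ofReal_log hx.le,
    ← Complex.cpow_def_of_ne_zero (Complex.ofReal_ne_zero.mpr hx.ne'),
    ← Complex.cpow_def_of_ne_zero hb]

lemma pi_cpow_half : (π:ℂ) ^ ((1:ℂ)/2) = ((Real.sqrt π : ℝ) : ℂ) := by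
  rw [show ((1:ℂ)/2) = (((1/2 : ℝ):ℝ):ℂ) by norm_num, ← Complex.ofReal_cpow pi_pos.le,
    Real.sqrt_eq_rpow]

lemma div_cpow_half {a : ℂ} (ha : 0 < a.re) :
    ((π:ℂ)/a) ^ ((1:ℂ)/2) = ((Real.sqrt π : ℝ):ℂ) * (a ^ ((1:ℂ)/2))⁻¹ := by
  have ha0 : a ≠ 0 := by intro h; rw [h] at ha; simp at ha
  have harg : a.arg ≠ π := by
    intro h
    have := Complex.arg_eq_pi_iff.mp h
    linarith [this.1]
  rw [div_eq_mul_inv, ofReal_mul_cpow pi_pos (inv_ne_zero ha0), pi_cpow_half,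
    Complex.inv_cpow _ _ harg]

lemma integral_exp_neg_mul_Ioi_real {b : ℝ} (hb : 0 < b) :
    ∫ t in Ioi (0:ℝ), Real.exp (-(b*t)) = b⁻¹ := by
  have h := integral_comp_mul_left_Ioi (fun x => Real.exp (-x)) 0 hb
  simp only [mul_zero, integral_exp_neg_Ioi_zero, smul_eq_mul, mul_one] at h
  exact h

lemma integral_cexp_neg_mul_Ioi {b : ℝ} (hb : 0 < b) :
    ∫ t in Ioi (0:ℝ), Complex.exp (((-(b*t) : ℝ) : ℂ)) = ((b:ℝ):ℂ)⁻¹ := by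
  have : ∀ t : ℝ, Complex.exp (((-(b*t) : ℝ) : ℂ)) = ((Real.exp (-(b*t)) : ℝ) : ℂ) := by
    intro t; rw [Complex.ofReal_exp]
  simp_rw [this]
  rw [show ((b:ℝ):ℂ)⁻¹ = ((b⁻¹:ℝ):ℂ) by push_cast; ring, ← integral_exp_neg_mul_Ioi_real hb]
  exact integral_ofReal

lemma sub_re_pos {τ : ℂ} (hτ : 0 < τ.im) {t : ℝ} (ht : 0 < t) :
    0 < ((t:ℂ) - Complex.I * τ).re := by
  simp [Complex.sub_re, Complex.mul_re]
  linarith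

lemma inner_gauss {τ : ℂ} (hτ : 0 < τ.im) {t : ℝ} (ht : 0 < t) :
    ∫ u : ℝ, Complex.exp (-((t:ℂ) - Complex.I*τ) * (u:ℂ)^2)
      = ((π:ℂ) / ((t:ℂ) - Complex.I*τ)) ^ ((1:ℂ)/2) :=
  integral_gaussian_complex (sub_re_pos hτ ht)

lemma integrable_E_phi0 {r : ℝ} (hr : r ≠ 0) {τ : ℂ} (hτ : 0 < τ.im) :
    Integrable fun w : ℝ =>
      Complex.exp ((π : ℂ) * Complex.I * τ * (w:ℂ)^2) * ((w:ℂ)^2 + (r:ℂ)^2)⁻¹ :=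
  integrable_E_mul hτ _ (cont_phi0 hr) _ (norm_phi0 hr)

lemma lhs_eq {r : ℝ} (hr : r ≠ 0) {τ : ℂ} (hτ : 0 < τ.im) :
    (∫ w : ℝ, Complex.exp ((π : ℂ) * Complex.I * τ * (w : ℂ) ^ 2)
        / ((w : ℂ) + Complex.I * (r : ℂ)))
      = -Complex.I * (r:ℂ) *
        ∫ w : ℝ, Complex.exp ((π : ℂ) * Complex.I * τ * (w:ℂ)^2)
          * ((w:ℂ)^2 + (r:ℂ)^2)⁻¹ := by
  have key : ∀ w : ℝ, Complex.exp ((π : ℂ) * Complex.I * τ * (w : ℂ) ^ 2)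
        / ((w : ℂ) + Complex.I * (r : ℂ))
      = Complex.exp ((π : ℂ) * Complex.I * τ * (w:ℂ)^2) * ((w:ℂ) / ((w:ℂ)^2 + (r:ℂ)^2))
        + (-Complex.I * (r:ℂ)) *
          (Complex.exp ((π : ℂ) * Complex.I * τ * (w:ℂ)^2) * ((w:ℂ)^2 + (r:ℂ)^2)⁻¹) := by
    intro w
    have h1 : (w:ℂ) + Complex.I * r ≠ 0 := by
      intro h
      have h2 := congrArg Complex.im h
      simp at h2
      exact hr h2
    have h2 := denom_ne hr w
    field_simp
    linear_combination (r:ℂ)^2 * Complex.I_sq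
  simp_rw [key]
  rw [integral_add (integrable_E_mul hτ _
        (by exact Continuous.div (by continuity) (by continuity) (denom_ne hr)) _ (norm_phi1 hr))
      ((integrable_E_phi0 hr hτ).const_mul _),
    odd_vanish, zero_add, integral_const_mul]

lemma F_norm {τ : ℂ} (r t u : ℝ) :
    ‖Complex.exp (((-(π*r^2*t) : ℝ) : ℂ)) * Complex.exp (-((t:ℂ) - Complex.I*τ) * (u:ℂ)^2)‖
      = rexp (-(π*r^2*t)) * rexp (-((t + τ.im) * u^2)) := by
  rw [norm_mul, Complex.norm_exp, Complex.norm_exp,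
    Complex.ofReal_re]
  congr 2
  simp [Complex.mul_re, Complex.sub_re, Complex.sub_im, Complex.mul_im, ← Complex.ofReal_pow]
  ring

lemma F_integrable {r : ℝ} (hr : r ≠ 0) {τ : ℂ} (hτ : 0 < τ.im) :
    Integrable
      (uncurry fun (t : ℝ) (u : ℝ) =>
        Complex.exp (((-(π*r^2*t) : ℝ) : ℂ)) * Complex.exp (-((t:ℂ) - Complex.I*τ) * (u:ℂ)^2))
      ((volume.restrict (Ioi 0)).prod volume) := by
  have hb : (0:ℝ) < π * r^2 := by positivity
  apply Integrable.mono'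
    (Integrable.mul_prod (L := ℝ)
      (f := fun t : ℝ => rexp (-(π*r^2) * t)) (g := fun u : ℝ => rexp (-τ.im * u^2))
      (exp_neg_integrableOn_Ioi 0 hb) (integrable_exp_neg_mul_sq hτ))
  · apply Continuous.aestronglyMeasurable
    apply Continuous.mul
    · exact Complex.continuous_exp.comp (by continuity)
    · exact Complex.continuous_exp.comp (by continuity)
  · rw [Measure.restrict_prod_eq_prod_univ]
    filter_upwards [ae_restrict_mem (measurableSet_Ioi.prod MeasurableSet.univ)] with p hp
    have ht : 0 < p.1 := hp.1
    rw [uncurry]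
    rw [F_norm]
    have h1 : rexp (-((p.1 + τ.im) * p.2^2)) ≤ rexp (-τ.im * p.2^2) := by
      apply Real.exp_le_exp.mpr
      nlinarith [sq_nonneg p.2]
    calc rexp (-(π*r^2*p.1)) * rexp (-((p.1 + τ.im) * p.2^2))
        ≤ rexp (-(π*r^2*p.1)) * rexp (-τ.im * p.2^2) :=
          mul_le_mul_of_nonneg_left h1 (Real.exp_nonneg _)
      _ = rexp (-(π*r^2) * p.1) * rexp (-τ.im * p.2^2) := by ring_nf

lemma sqrtπ_ne : ((Real.sqrt π : ℝ):ℂ) ≠ 0 := by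
  exact_mod_cast (Real.sqrt_pos.mpr pi_pos).ne'

lemma rhs_core {r : ℝ} (hr : r ≠ 0) {τ : ℂ} (hτ : 0 < τ.im) :
    (∫ t in Ioi (0:ℝ),
        Complex.exp (((-(π*r^2*t) : ℝ) : ℂ)) * (((t:ℂ) - Complex.I*τ) ^ ((1:ℂ)/2))⁻¹)
      = (π:ℂ)⁻¹ * ∫ w : ℝ, Complex.exp ((π:ℂ)*Complex.I*τ*(w:ℂ)^2)
          * ((w:ℂ)^2 + (r:ℂ)^2)⁻¹ := by
  set s : ℝ := Real.sqrt π with hs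
  -- Step 1: express as (s)⁻¹ * double integral
  have step1 : (∫ t in Ioi (0:ℝ),
        Complex.exp (((-(π*r^2*t) : ℝ) : ℂ)) * (((t:ℂ) - Complex.I*τ) ^ ((1:ℂ)/2))⁻¹)
      = ((s:ℂ))⁻¹ * ∫ t in Ioi (0:ℝ),
          Complex.exp (((-(π*r^2*t) : ℝ) : ℂ)) * ∫ u : ℝ,
            Complex.exp (-((t:ℂ) - Complex.I*τ) * (u:ℂ)^2) := by
    rw [← integral_const_mul]
    apply setIntegral_congr_fun measurableSet_Ioi
    intro t ht
    simp only
    rw [inner_gauss hτ ht, div_cpow_half (sub_re_pos hτ ht), hs]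
    field_simp [sqrtπ_ne]
  -- Step 2: Fubini
  have step2 : (∫ t in Ioi (0:ℝ),
        Complex.exp (((-(π*r^2*t) : ℝ) : ℂ)) * ∫ u : ℝ,
          Complex.exp (-((t:ℂ) - Complex.I*τ) * (u:ℂ)^2))
      = ∫ u : ℝ, ∫ t in Ioi (0:ℝ),
          Complex.exp (((-(π*r^2*t) : ℝ) : ℂ)) * Complex.exp (-((t:ℂ) - Complex.I*τ) * (u:ℂ)^2) := by
    have h := integral_integral_swap (μ := volume.restrict (Ioi (0:ℝ))) (ν := (volume : Measure ℝ))
      (f := fun (t : ℝ) (u : ℝ) =>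
        Complex.exp (((-(π*r^2*t) : ℝ) : ℂ)) * Complex.exp (-((t:ℂ) - Complex.I*τ) * (u:ℂ)^2))
      (F_integrable hr hτ)
    simpa only [integral_const_mul] using h
  -- Step 3: inner t-integral
  have step3 : ∀ u : ℝ, (∫ t in Ioi (0:ℝ),
        Complex.exp (((-(π*r^2*t) : ℝ) : ℂ)) * Complex.exp (-((t:ℂ) - Complex.I*τ) * (u:ℂ)^2))
      = Complex.exp (Complex.I*τ*(u:ℂ)^2) * ((π*r^2 + u^2 : ℝ):ℂ)⁻¹ := by
    intro u
    have hb : (0:ℝ) < π*r^2 + u^2 := by positivity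
    have key : ∀ t ∈ Ioi (0:ℝ),
        Complex.exp (((-(π*r^2*t) : ℝ) : ℂ)) * Complex.exp (-((t:ℂ) - Complex.I*τ) * (u:ℂ)^2)
        = Complex.exp (Complex.I*τ*(u:ℂ)^2) * Complex.exp (((-((π*r^2 + u^2)*t) : ℝ) : ℂ)) := by
      intro t _
      rw [← Complex.exp_add, ← Complex.exp_add]
      congr 1
      push_cast
      ring
    rw [setIntegral_congr_fun measurableSet_Ioi key, integral_const_mul,
      integral_cexp_neg_mul_Ioi hb]
  simp_rw [step1, step2, step3]
  -- Step 4: substitution u = s * w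
  have hspos : 0 < s := Real.sqrt_pos.mpr pi_pos
  have hs2 : s^2 = π := Real.sq_sqrt pi_pos.le
  have sub := MeasureTheory.Measure.integral_comp_mul_left
    (fun u : ℝ => Complex.exp (Complex.I*τ*(u:ℂ)^2) * ((π*r^2 + u^2 : ℝ):ℂ)⁻¹) s
  have key2 : ∀ w : ℝ, Complex.exp (Complex.I*τ*((s*w:ℝ):ℂ)^2) * ((π*r^2 + (s*w)^2 : ℝ):ℂ)⁻¹
      = (π:ℂ)⁻¹ * (Complex.exp ((π:ℂ)*Complex.I*τ*(w:ℂ)^2) * ((w:ℂ)^2 + (r:ℂ)^2)⁻¹) := by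
    intro w
    have e1 : Complex.I*τ*((s*w:ℝ):ℂ)^2 = (π:ℂ)*Complex.I*τ*(w:ℂ)^2 := by
      push_cast
      rw [mul_pow, show ((s:ℂ))^2 = ((s^2 : ℝ):ℂ) by push_cast; ring, hs2]
      ring
    have e2 : (π*r^2 + (s*w)^2 : ℝ) = π * (w^2 + r^2) := by
      rw [mul_pow, hs2]; ring
    rw [e1, e2, cast_denom]
    push_cast
    rw [mul_inv]
    have : ((w:ℝ)^2 + (r:ℝ)^2 : ℝ) ≥ 0 := by positivity
    ring
  simp_rw [key2] at sub
  rw [integral_const_mul] at sub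
  rw [show |s⁻¹| = s⁻¹ by rw [abs_of_pos (by positivity)]] at sub
  rw [Complex.real_smul, show ((s⁻¹:ℝ):ℂ) = ((s:ℝ):ℂ)⁻¹ by push_cast; ring] at sub
  exact sub.symm

end GaussPoleAux

open GaussPoleAux Set Function in
/-- For real `r ≠ 0` and `τ` in the upper half plane,
`∫_ℝ e^{πiτw²}/(w+ir) dw = -πr ∫₀^{i∞} e^{πir²z}/√(-i(z+τ)) dz`,
the second integral being along the positive imaginary axis `z = it`. -/
theorem integral_gaussian_pole (r : ℝ) (hr : r ≠ 0) (τ : ℂ) (hτ : 0 < τ.im) :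
    ∫ w : ℝ, Complex.exp ((π : ℂ) * Complex.I * τ * (w : ℂ) ^ 2) / ((w : ℂ) + Complex.I * (r : ℂ))
      = -(π : ℂ) * (r : ℂ) *
        ∫ t in Set.Ioi (0:ℝ),
          Complex.I * Complex.exp ((π : ℂ) * Complex.I * (r : ℂ) ^ 2 * (Complex.I * (t : ℂ))) /
            ((-Complex.I * (Complex.I * (t : ℂ) + τ)) ^ ((1:ℂ)/2)) := by
  have keyR : ∀ t ∈ Ioi (0:ℝ),
      Complex.I * Complex.exp ((π : ℂ) * Complex.I * (r : ℂ) ^ 2 * (Complex.I * (t : ℂ))) /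
          ((-Complex.I * (Complex.I * (t : ℂ) + τ)) ^ ((1:ℂ)/2))
        = Complex.I *
          (Complex.exp (((-(π*r^2*t) : ℝ) : ℂ)) * (((t:ℂ) - Complex.I*τ) ^ ((1:ℂ)/2))⁻¹) := by
    intro t _
    have e1 : (π : ℂ) * Complex.I * (r : ℂ) ^ 2 * (Complex.I * (t : ℂ))
        = ((-(π*r^2*t) : ℝ) : ℂ) := by
      push_cast
      linear_combination ((π:ℂ)*(r:ℂ)^2*(t:ℂ)) * Complex.I_sq
    have e2 : -Complex.I * (Complex.I * (t : ℂ) + τ) = (t:ℂ) - Complex.I*τ := by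
      linear_combination (-(t:ℂ)) * Complex.I_sq
    rw [e1, e2, div_eq_mul_inv, mul_assoc]
  rw [setIntegral_congr_fun measurableSet_Ioi keyR, integral_const_mul, rhs_core hr hτ,
    lhs_eq hr hτ]
  have hπ : ((π:ℝ):ℂ) ≠ 0 := Complex.ofReal_ne_zero.mpr pi_ne_zero
  field_simp
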